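/- arXiv:0809.1681 — 8 statements merged into one kernel-verified Lean document; each statement's English description precedes it below -/
import Mathlib

section
/- Let p_J, p_n ∈ ℝ with 0 < p_J < 1 and 0 < p_n ≤ 1, and let D_J, D_n ≥ 0. Define p_{J'} = 1 - (1 - p_J)(1 - p_n) and D_{J'} = (p_J * D_J + (1 - p_J) * p_n * D_n) / p_{J'}. Let D_i = 1/p_J + D_J and D_i' = 1/p_{J'} + D_{J'}. Then D_i' ≤ D_i if and only if D_i ≥ D_n. -/
/-! Writing the enlarged aggregated probability as `p_J' = p_J + (1 - p_J) p_n`, a direct computation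
gives `D_i - D_i' = (1 - p_J) p_n / p_J' * (D_i - D_n)` with a positive factor, so `D_i - D_i'` and
`D_i - D_n` have the same sign. -/

theorem anypath_cost_sub_add_node {p q D E : ℝ} (hp : p ≠ 0) (hpq : p + q ≠ 0) :
    1 / p + D - (1 / (p + q) + (p * D + q * E) / (p + q)) = q / (p + q) * (1 / p + D - E) := by
  field_simp
  ring

theorem anypath_add_node_iff_general (pJ pn DJ Dn : ℝ)
    (hpJ0 : 0 < pJ) (hpJ1 : pJ < 1) (hpn0 : 0 < pn) :
    let pJ' : ℝ := 1 - (1 - pJ) * (1 - pn)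
    let DJ' : ℝ := (pJ * DJ + (1 - pJ) * pn * Dn) / pJ'
    let Di : ℝ := 1 / pJ + DJ
    let Di' : ℝ := 1 / pJ' + DJ'
    Di' ≤ Di ↔ Dn ≤ Di := by
  intro pJ' DJ' Di Di'
  have hq : 0 < (1 - pJ) * pn := mul_pos (sub_pos.2 hpJ1) hpn0
  have hpJ' : pJ' = pJ + (1 - pJ) * pn := by ring
  have hpos : 0 < pJ + (1 - pJ) * pn := add_pos hpJ0 hq
  have key : Di - Di' = (1 - pJ) * pn / pJ' * (Di - Dn) := by
    simp only [Di, Di', DJ', hpJ']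
    exact anypath_cost_sub_add_node hpJ0.ne' hpos.ne'
  rw [← sub_nonneg, key, mul_nonneg_iff_of_pos_left (hpJ' ▸ div_pos hq hpos), sub_nonneg]

theorem anypath_add_node_iff (pJ pn DJ Dn : ℝ)
    (hpJ0 : 0 < pJ) (hpJ1 : pJ < 1) (hpn0 : 0 < pn) (hpn1 : pn ≤ 1)
    (hDJ : 0 ≤ DJ) (hDn : 0 ≤ Dn) :
    let pJ' : ℝ := 1 - (1 - pJ) * (1 - pn)
    let DJ' : ℝ := (pJ * DJ + (1 - pJ) * pn * Dn) / pJ'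
    let Di : ℝ := 1 / pJ + DJ
    let Di' : ℝ := 1 / pJ' + DJ'
    Di' ≤ Di ↔ Dn ≤ Di :=
  anypath_add_node_iff_general pJ pn DJ Dn hpJ0 hpJ1 hpn0
end

section
/- Let p_J, p_n ∈ ℝ with 0 < p_J < 1 and 0 < p_n ≤ 1, and D_J, D_n ≥ 0. Define p_{J'} = 1 - (1-p_J)(1-p_n) and D_{J'} = (p_J D_J + (1-p_J) p_n D_n)/p_{J'}. If 1/p_{J'} + D_{J'} ≤ 1/p_J + D_J (i.e., including n does not increase the cost), then 1/p_{J'} + D_{J'} ≥ D_n. -/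
/-!
The new distance is the mediant of the old distance `(1 + p_J D_J) / p_J` and of
`D_n = ((1 - p_J) p_n D_n) / ((1 - p_J) p_n)`, so it lies between them: if it does not
exceed the first, it is at least the second.
-/

theorem div_le_add_div_add_of_add_div_add_le {a b c d : ℝ} (hb : 0 < b) (hd : 0 < d)
    (h : (a + c) / (b + d) ≤ a / b) : c / d ≤ (a + c) / (b + d) := by
  rw [div_le_div_iff₀ (add_pos hb hd) hb] at h
  rw [div_le_div_iff₀ hd (add_pos hb hd)]
  linear_combination h

theorem anypath_optimal_set_distance_ge_farthest_general (pJ pn DJ Dn : ℝ)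
    (hpJ0 : 0 < pJ) (hpJ1 : pJ < 1) (hpn0 : 0 < pn)
    (h : 1 / (1 - (1 - pJ) * (1 - pn)) +
          (pJ * DJ + (1 - pJ) * pn * Dn) / (1 - (1 - pJ) * (1 - pn))
        ≤ 1 / pJ + DJ) :
    Dn ≤ 1 / (1 - (1 - pJ) * (1 - pn)) +
          (pJ * DJ + (1 - pJ) * pn * Dn) / (1 - (1 - pJ) * (1 - pn)) := by
  have hq : 0 < (1 - pJ) * pn := mul_pos (sub_pos.mpr hpJ1) hpn0
  have hδ : 1 / (1 - (1 - pJ) * (1 - pn)) +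
        (pJ * DJ + (1 - pJ) * pn * Dn) / (1 - (1 - pJ) * (1 - pn)) =
      (1 + pJ * DJ + (1 - pJ) * pn * Dn) / (pJ + (1 - pJ) * pn) := by
    rw [← add_div]
    ring_nf
  have hJ : 1 / pJ + DJ = (1 + pJ * DJ) / pJ := by
    field_simp
  rw [hδ, hJ] at h
  have hmediant := div_le_add_div_add_of_add_div_add_le hpJ0 hq h
  rwa [mul_div_cancel_left₀ Dn hq.ne', ← hδ] at hmediant

theorem anypath_optimal_set_distance_ge_farthest (pJ pn DJ Dn : ℝ)
    (hpJ0 : 0 < pJ) (hpJ1 : pJ < 1) (hpn0 : 0 < pn) (hpn1 : pn ≤ 1)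
    (hDJ : 0 ≤ DJ) (hDn : 0 ≤ Dn)
    (h : 1 / (1 - (1 - pJ) * (1 - pn)) +
          (pJ * DJ + (1 - pJ) * pn * Dn) / (1 - (1 - pJ) * (1 - pn))
        ≤ 1 / pJ + DJ) :
    Dn ≤ 1 / (1 - (1 - pJ) * (1 - pn)) +
          (pJ * DJ + (1 - pJ) * pn * Dn) / (1 - (1 - pJ) * (1 - pn)) :=
  anypath_optimal_set_distance_ge_farthest_general pJ pn DJ Dn hpJ0 hpJ1 hpn0 h
end

section
/- Let p_J, p_n ∈ ℝ with 0 < p_J < 1 and 0 < p_n ≤ 1, and D_J, D_n ≥ 0. Define p_{J'} = 1 - (1-p_J)(1-p_n) and D_{J'} = (p_J D_J + (1-p_J) p_n D_n)/p_{J'}. If 1/p_{J'} + D_{J'} = D_n, then 1/p_J + D_J = D_n. -/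
/-!
Write `q = 1 - (1 - p_J)(1 - p_n) = p_J + (1 - p_J) p_n`. Clearing the denominator `q` in the
hypothesis gives `1 + p_J D_J + (1 - p_J) p_n D_n = (p_J + (1 - p_J) p_n) D_n`; the contribution
of `n` appears on both sides and cancels, leaving `1 + p_J D_J = p_J D_n`.
-/

lemma one_sub_mul_one_sub_eq_add_mul {K : Type*} [CommRing K] (a b : K) :
    1 - (1 - a) * (1 - b) = a + (1 - a) * b := by
  ring

lemma one_div_add_eq_of_mix_eq {K : Type*} [Field K] {a b x y : K} (ha : a ≠ 0)
    (hab : a + b ≠ 0) (h : 1 / (a + b) + (a * x + b * y) / (a + b) = y) :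
    1 / a + x = y := by
  have hcleared : 1 + a * x = a * y := by
    field_simp at h
    linear_combination h
  field_simp
  linear_combination hcleared

theorem anypath_redundant_link_general (pJ pn DJ Dn : ℝ)
    (hpJ0 : 0 < pJ) (hpJ1 : pJ < 1) (hpn0 : 0 < pn)
    (h : 1 / (1 - (1 - pJ) * (1 - pn)) +
          (pJ * DJ + (1 - pJ) * pn * Dn) / (1 - (1 - pJ) * (1 - pn)) = Dn) :
    1 / pJ + DJ = Dn := by
  rw [one_sub_mul_one_sub_eq_add_mul] at h
  have hq : 0 < pJ + (1 - pJ) * pn :=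
    add_pos_of_pos_of_nonneg hpJ0 (mul_nonneg (sub_nonneg.2 hpJ1.le) hpn0.le)
  exact one_div_add_eq_of_mix_eq hpJ0.ne' hq.ne' h

theorem anypath_redundant_link (pJ pn DJ Dn : ℝ)
    (hpJ0 : 0 < pJ) (hpJ1 : pJ < 1) (hpn0 : 0 < pn) (hpn1 : pn ≤ 1)
    (hDJ : 0 ≤ DJ) (hDn : 0 ≤ Dn)
    (h : 1 / (1 - (1 - pJ) * (1 - pn)) +
          (pJ * DJ + (1 - pJ) * pn * Dn) / (1 - (1 - pJ) * (1 - pn)) = Dn) :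
    1 / pJ + DJ = Dn :=
  anypath_redundant_link_general pJ pn DJ Dn hpJ0 hpJ1 hpn0 h
end

section
/- Let 0 < p_{k-1} ≤ 1, 0 < p_k ≤ 1 with (1-p_{k-1})(1-p_k) < 1, and let 0 ≤ D_{k-1} ≤ D_k. Then the two-node remaining cost D_{J'} = (p_{k-1} D_{k-1} + (1-p_{k-1}) p_k D_k) / (1 - (1-p_{k-1})(1-p_k)) satisfies D_{J'} ≤ D_k, and the total cost 1/(1 - (1-p_{k-1})(1-p_k)) + D_{J'} is at most 1/p_k + D_k. -/
theorem anypath_prefix_basis_step (pk1 pk Dk1 Dk : ℝ)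
    (hpk10 : 0 < pk1) (hpk11 : pk1 ≤ 1) (hpk0 : 0 < pk) (hpk1 : pk ≤ 1)
    (hprod : (1 - pk1) * (1 - pk) < 1)
    (hD0 : 0 ≤ Dk1) (hD : Dk1 ≤ Dk) :
    let DJ' : ℝ := (pk1 * Dk1 + (1 - pk1) * pk * Dk) / (1 - (1 - pk1) * (1 - pk))
    DJ' ≤ Dk ∧ 1 / (1 - (1 - pk1) * (1 - pk)) + DJ' ≤ 1 / pk + Dk := by
  intro DJ'
  have hq0 : 0 < 1 - (1 - pk1) * (1 - pk) := by nlinarith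
  have h1 : DJ' ≤ Dk := by
    rw [div_le_iff₀ hq0]
    nlinarith
  refine ⟨h1, ?_⟩
  have h2 : 1 / (1 - (1 - pk1) * (1 - pk)) ≤ 1 / pk := by
    apply one_div_le_one_div_of_le hpk0
    nlinarith
  linarith
end

section
/- Let p_{j-1}, p_J ∈ (0,1] with (1-p_{j-1})(1-p_J) < 1, and let 0 ≤ D_{j-1} ≤ D_J. Define D_{J'} = (p_{j-1} D_{j-1} + (1-p_{j-1}) p_J D_J)/(1-(1-p_{j-1})(1-p_J)). Then D_{J'} ≤ D_J and 1/(1-(1-p_{j-1})(1-p_J)) + D_{J'} ≤ 1/p_J + D_J. -/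
theorem anypath_prefix_inductive_step (pj1 pJ Dj1 DJ : ℝ)
    (hpj10 : 0 < pj1) (hpj11 : pj1 ≤ 1) (hpJ0 : 0 < pJ) (hpJ1 : pJ ≤ 1)
    (hprod : (1 - pj1) * (1 - pJ) < 1)
    (hD0 : 0 ≤ Dj1) (hD : Dj1 ≤ DJ) :
    let DJ' : ℝ := (pj1 * Dj1 + (1 - pj1) * pJ * DJ) / (1 - (1 - pj1) * (1 - pJ))
    DJ' ≤ DJ ∧ 1 / (1 - (1 - pj1) * (1 - pJ)) + DJ' ≤ 1 / pJ + DJ := by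
  intro DJ'
  have hq : 0 < 1 - (1 - pj1) * (1 - pJ) := by linarith
  have h1 : DJ' ≤ DJ := by
    rw [div_le_iff₀ hq]
    nlinarith
  refine ⟨h1, ?_⟩
  have hqp : pJ ≤ 1 - (1 - pj1) * (1 - pJ) := by nlinarith
  have h2 : 1 / (1 - (1 - pj1) * (1 - pJ)) ≤ 1 / pJ :=
    one_div_le_one_div_of_le hpJ0 hqp
  linarith
end

section
/- Let n ≥ 1, p : Fin n → ℝ with 0 < p j ≤ 1, and D : Fin n → ℝ with 0 ≤ D 0 ≤ D 1 ≤ … ≤ D (n-1). Define cost(k) = (1 + ∑_{j≤k} p j * D j * ∏_{i<j}(1 - p i)) / (1 - ∏_{j≤k}(1 - p j)) for 0 ≤ k ≤ n-1. Suppose cost(n-1) ≥ D (n-1) (the full-set cost is at least the largest member distance). Then cost is monotone nonincreasing in k: cost(0) ≥ cost(1) ≥ … ≥ cost(n-1). -/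
/-!
Write `C k` for the cost of the prefix ending at `k` and `P` for the probability that no neighbour
of that prefix receives. If `b` is the next neighbour, `C b` is the mean of `C k` and `D b` with
weights `1 - P` and `p b * P`, so it lies between them. Hence `D b ≤ C b` forces `C b ≤ C k` and
`D k ≤ D b ≤ C k`, and the hypothesis at the last neighbour propagates downwards.
-/

open Finset

section WeightedMean

variable {u v a d : ℝ}

theorem le_of_le_weightedMean (hu : 0 < u) (hv : 0 ≤ v) (h : d ≤ (u * a + v * d) / (u + v)) :
    d ≤ a := by
  rw [le_div_iff₀ (by positivity)] at h
  nlinarith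

theorem weightedMean_le_of_le (hu : 0 < u) (hv : 0 ≤ v) (h : d ≤ a) :
    (u * a + v * d) / (u + v) ≤ a := by
  rw [div_le_iff₀ (by positivity)]
  nlinarith

end WeightedMean

section AnypathCost

variable {ι : Type*} [LinearOrder ι] [LocallyFiniteOrderBot ι] {p D : ι → ℝ}

noncomputable def anypathCost (p D : ι → ℝ) (k : ι) : ℝ :=
  (1 + ∑ j ∈ Iic k, p j * D j * ∏ i ∈ Iio j, (1 - p i)) / (1 - ∏ j ∈ Iic k, (1 - p j))

theorem prod_Iic_one_sub_nonneg (hp : ∀ j, p j ≤ 1) (k : ι) : 0 ≤ ∏ j ∈ Iic k, (1 - p j) :=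
  prod_nonneg fun j _ ↦ sub_nonneg.2 (hp j)

theorem prod_Iic_one_sub_lt_one [OrderBot ι] (hp : ∀ j, 0 < p j ∧ p j ≤ 1) (k : ι) :
    ∏ j ∈ Iic k, (1 - p j) < 1 := by
  have hbot : ⊥ ∈ Iic k := mem_Iic.2 bot_le
  have hrest : ∏ j ∈ (Iic k).erase ⊥, (1 - p j) ≤ 1 :=
    prod_le_one (fun j _ ↦ sub_nonneg.2 (hp j).2) fun j _ ↦ by linarith [(hp j).1]
  rw [← mul_prod_erase _ _ hbot]
  nlinarith [(hp ⊥).1, (hp ⊥).2]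

theorem anypathCost_of_covBy {a b : ι} (hab : a ⋖ b) (hP : ∏ j ∈ Iic a, (1 - p j) ≠ 1) :
    anypathCost p D b =
      ((1 - ∏ j ∈ Iic a, (1 - p j)) * anypathCost p D a +
          (p b * ∏ j ∈ Iic a, (1 - p j)) * D b) /
        ((1 - ∏ j ∈ Iic a, (1 - p j)) + p b * ∏ j ∈ Iic a, (1 - p j)) := by
  have hIio : Iio b = Iic a := coe_injective <| by simpa using hab.Iio_eq
  have hP' : 1 - ∏ j ∈ Iic a, (1 - p j) ≠ 0 := sub_ne_zero.2 (Ne.symm hP)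
  simp only [anypathCost, Iic_eq_cons_Iio b, sum_cons, prod_cons, hIio]
  field_simp
  ring

theorem anypathCost_covBy_le [OrderBot ι] (hp : ∀ j, 0 < p j ∧ p j ≤ 1) {a b : ι} (hab : a ⋖ b)
    (hb : D b ≤ anypathCost p D b) :
    anypathCost p D b ≤ anypathCost p D a ∧ D b ≤ anypathCost p D a := by
  have hP := prod_Iic_one_sub_lt_one hp a
  have hu : 0 < 1 - ∏ j ∈ Iic a, (1 - p j) := sub_pos.2 hP
  have hv : 0 ≤ p b * ∏ j ∈ Iic a, (1 - p j) :=
    mul_nonneg (hp b).1.le (prod_Iic_one_sub_nonneg (fun j ↦ (hp j).2) a)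
  rw [anypathCost_of_covBy hab hP.ne] at hb ⊢
  have hDb := le_of_le_weightedMean hu hv hb
  exact ⟨weightedMean_le_of_le hu hv hDb, hDb⟩

variable [OrderBot ι] [OrderTop ι] [Finite ι]

theorem le_anypathCost (hp : ∀ j, 0 < p j ∧ p j ≤ 1) (hD : Monotone D)
    (htop : D ⊤ ≤ anypathCost p D ⊤) (k : ι) : D k ≤ anypathCost p D k := by
  induction k using WellFoundedGT.induction with
  | _ k ih =>
    obtain rfl | hk := (le_top : k ≤ ⊤).eq_or_lt
    · exact htop
    obtain ⟨b, hkb, -⟩ := exists_covBy_le_of_lt hk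
    exact (hD hkb.le).trans (anypathCost_covBy_le hp hkb (ih b hkb.lt)).2

theorem anypathCost_antitone [LocallyFiniteOrder ι] (hp : ∀ j, 0 < p j ∧ p j ≤ 1)
    (hD : Monotone D) (htop : D ⊤ ≤ anypathCost p D ⊤) : Antitone (anypathCost p D) :=
  (antitone_iff_forall_covBy _).2 fun _ b hab ↦
    (anypathCost_covBy_le hp hab (le_anypathCost hp hD htop b)).1

end AnypathCost

theorem anypath_prefix_cost_monotone_general (n : ℕ) (p D : Fin (n + 1) → ℝ)
    (hp : ∀ j, 0 < p j ∧ p j ≤ 1)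
    (hmono : Monotone D) :
    let cost : Fin (n + 1) → ℝ := fun k =>
      (1 + ∑ j ∈ Finset.Iic k, p j * D j * ∏ i ∈ Finset.Iio j, (1 - p i)) /
        (1 - ∏ j ∈ Finset.Iic k, (1 - p j))
    D (Fin.last n) ≤ cost (Fin.last n) →
      ∀ k k' : Fin (n + 1), k ≤ k' → cost k' ≤ cost k := by
  intro cost hlast
  exact anypathCost_antitone hp hmono hlast

theorem anypath_prefix_cost_monotone (n : ℕ) (p D : Fin (n + 1) → ℝ)
    (hp : ∀ j, 0 < p j ∧ p j ≤ 1)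
    (hD0 : 0 ≤ D 0) (hmono : Monotone D) :
    let cost : Fin (n + 1) → ℝ := fun k =>
      (1 + ∑ j ∈ Finset.Iic k, p j * D j * ∏ i ∈ Finset.Iio j, (1 - p i)) /
        (1 - ∏ j ∈ Finset.Iic k, (1 - p j))
    D (Fin.last n) ≤ cost (Fin.last n) →
      ∀ k k' : Fin (n + 1), k ≤ k' → cost k' ≤ cost k :=
  anypath_prefix_cost_monotone_general n p D hp hmono
end

section
/- Let n ≥ 2, p : Fin n → ℝ with 0 < p j ≤ 1, and D : Fin n → ℝ. Set J = {0,…,n-2} and J' = {0,…,n-1}. Define p_S = 1 - ∏_{j∈S}(1-p j) and D_S = (∑_{j∈S} p j D j ∏_{k∈S,k<j}(1-p k))/p_S (when p_S > 0). Then, assuming p_J > 0, the aggregation identity holds: D_{J'} = (p_J * D_J + (1 - p_J) * p (n-1) * D (n-1)) / (1 - (1 - p_J)(1 - p (n-1))). -/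
open Finset

/-!
Appending a node `l` of lowest priority to a forwarding set `S` multiplies the failure
probability `∏ (1 - p j)` by `1 - p l`, leaves the cost terms of `S` unchanged (no node of `S`
sees `l` ahead of it), and adds the single term `p l * D l * ∏_{k ∈ S} (1 - p k)`. Writing the
old numerator as `p_S * D_S` gives the identity.
-/

namespace Anypath

section CommRing

variable {α R : Type*} [LinearOrder α] [CommRing R] (p D : α → R)

def deliveryProb (S : Finset α) : R := 1 - ∏ j ∈ S, (1 - p j)

def costNumerator (S : Finset α) : R :=
  ∑ j ∈ S, p j * D j * ∏ k ∈ S.filter (fun k => k < j), (1 - p k)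

variable {p} {S : Finset α} {l : α}

theorem deliveryProb_insert (hl : l ∉ S) :
    deliveryProb p (insert l S) = 1 - (1 - deliveryProb p S) * (1 - p l) := by
  simp only [deliveryProb, prod_insert hl, sub_sub_cancel, mul_comm]

theorem costNumerator_insert_of_forall_lt (h : ∀ j ∈ S, j < l) :
    costNumerator p D (insert l S) =
      costNumerator p D S + (1 - deliveryProb p S) * p l * D l := by
  have hl : l ∉ S := fun hlS => (h l hlS).false
  have filter_last : (insert l S).filter (fun k => k < l) = S := by
    rw [filter_insert, if_neg (lt_irrefl l), filter_true_of_mem h]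
  have filter_of_mem : ∀ j ∈ S,
      (insert l S).filter (fun k => k < j) = S.filter (fun k => k < j) := fun j hj => by
    rw [filter_insert, if_neg (h j hj).not_gt]
  rw [costNumerator, sum_insert hl, filter_last, sum_congr rfl fun j hj => by
    rw [filter_of_mem j hj], deliveryProb, sub_sub_cancel, add_comm, costNumerator]
  ring

end CommRing

theorem costNumerator_div_deliveryProb_insert_of_forall_lt {α K : Type*} [LinearOrder α]
    [Field K] {p : α → K} (D : α → K) {S : Finset α} {l : α} (h : ∀ j ∈ S, j < l)
    (hS : deliveryProb p S ≠ 0) :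
    costNumerator p D (insert l S) / deliveryProb p (insert l S) =
      (deliveryProb p S * (costNumerator p D S / deliveryProb p S) +
          (1 - deliveryProb p S) * p l * D l) /
        (1 - (1 - deliveryProb p S) * (1 - p l)) := by
  rw [costNumerator_insert_of_forall_lt D h, deliveryProb_insert fun hlS => (h l hlS).false,
    mul_div_cancel₀ _ hS]

end Anypath

theorem anypath_aggregation_identity_general (n : ℕ) (p D : Fin (n + 2) → ℝ) :
    let J : Finset (Fin (n + 2)) := Finset.Iio (Fin.last (n + 1))
    let J' : Finset (Fin (n + 2)) := Finset.univ
    let pS : Finset (Fin (n + 2)) → ℝ := fun S => 1 - ∏ j ∈ S, (1 - p j)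
    let DS : Finset (Fin (n + 2)) → ℝ := fun S =>
      (∑ j ∈ S, p j * D j * ∏ k ∈ S.filter (fun k => k < j), (1 - p k)) / pS S
    0 < pS J →
      DS J' = (pS J * DS J + (1 - pS J) * p (Fin.last (n + 1)) * D (Fin.last (n + 1))) /
        (1 - (1 - pS J) * (1 - p (Fin.last (n + 1)))) := by
  intro J J' pS DS hJ
  have hJ' : J' = insert (Fin.last (n + 1)) J := by
    rw [Iio_insert, ← Fin.top_eq_last, Iic_top]
  rw [show DS J' = _ / _ from rfl, hJ']
  exact Anypath.costNumerator_div_deliveryProb_insert_of_forall_lt D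
    (fun j hj => mem_Iio.mp hj) hJ.ne'

theorem anypath_aggregation_identity (n : ℕ) (p D : Fin (n + 2) → ℝ)
    (hp : ∀ j, 0 < p j ∧ p j ≤ 1) :
    let J : Finset (Fin (n + 2)) := Finset.Iio (Fin.last (n + 1))
    let J' : Finset (Fin (n + 2)) := Finset.univ
    let pS : Finset (Fin (n + 2)) → ℝ := fun S => 1 - ∏ j ∈ S, (1 - p j)
    let DS : Finset (Fin (n + 2)) → ℝ := fun S =>
      (∑ j ∈ S, p j * D j * ∏ k ∈ S.filter (fun k => k < j), (1 - p k)) / pS S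
    0 < pS J →
      DS J' = (pS J * DS J + (1 - pS J) * p (Fin.last (n + 1)) * D (Fin.last (n + 1))) /
        (1 - (1 - pS J) * (1 - p (Fin.last (n + 1)))) :=
  anypath_aggregation_identity_general n p D
end

section
/- Let r > 0 (bit rate), s > 0 (packet size), and p : Fin n → ℝ with 0 < p j ≤ 1 and D : Fin n → ℝ sorted nondecreasingly with D j ≥ 0. Define the EATT hyperlink cost d_S = (s/r) / (1 - ∏_{j∈S}(1-p j)) and the remaining cost D_S as the relay-weighted average. Then for prefix sets, adding neighbor j−1 with D_{j-1} ≤ D_S never increases the total EATT cost d_{S∪{j-1}} + D_{S∪{j-1}} ≤ d_S + D_S. -/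
theorem eatt_prefix_extension (r s p1 pS D1 DS : ℝ)
    (hr : 0 < r) (hs : 0 < s)
    (hp10 : 0 < p1) (hp11 : p1 ≤ 1) (hpS0 : 0 < pS) (hpS1 : pS ≤ 1)
    (hD0 : 0 ≤ D1) (hD : D1 ≤ DS) :
    let pS' : ℝ := 1 - (1 - p1) * (1 - pS)
    let DS' : ℝ := (p1 * D1 + (1 - p1) * pS * DS) / pS'
    (s / r) / pS' + DS' ≤ (s / r) / pS + DS := by
  intro pS' DS'
  have hpS' : 0 < pS' := by
    have : pS' = p1 + (1 - p1) * pS := by unfold pS'; ring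
    rw [this]
    nlinarith
  have hc : 0 < s / r := div_pos hs hr
  have h1 : s / r / pS' ≤ s / r / pS :=
    div_le_div_of_nonneg_left hc.le hpS0 (by unfold pS'; nlinarith)
  have h2 : DS' ≤ DS := by
    unfold DS'
    rw [div_le_iff₀ hpS']
    unfold pS'
    nlinarith
  linarith
end
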